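/- (RK via the partially noisy system.) Let A, E ∈ ℝ^{m×n} with rank(A + E) = rank(A), Ã := A + E with every row ã_i nonzero. Let σ > 0 satisfy ‖A z‖ ≥ σ‖z‖ for every z ∈ range(Aᵀ) with ‖E‖ < σ, and let σ̃ > 0 satisfy ‖Ã z‖ ≥ σ̃‖z‖ for every z ∈ range(Ãᵀ). Let x_LS satisfy A x_LS = b and x_LS ∈ range(Aᵀ); assume the partially noisy system Ãx = b is consistent, with minimum-norm solution x_PNLS (Ã x_PNLS = b, x_PNLS ∈ range(Ãᵀ)). Let ε ∈ ℝ^m, b̃ := b + ε, set p_i := ‖ã_i‖²/‖Ã‖_F² and K_i(x) := x − ((⟨ã_i, x⟩ − b̃_i)/‖ã_i‖²) ã_i, and let x_0 ∈ range(Ãᵀ). Then for every k ≥ 0, Σ_{(i_1,…,i_k) ∈ {1,…,m}^k} p_{i_1}⋯p_{i_k} ‖K_{i_k}(⋯K_{i_1}(x_0)⋯) − x_LS‖ ≤ (1 − σ̃²/‖Ã‖_F²)^{k/2} ‖x_0 − x_PNLS‖ + 2‖x_LS‖(‖E‖/σ)/(1 − ‖E‖/σ) + ‖ε‖/σ̃.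 -/

import Mathlib

/-!
Split `‖x_k - x_LS‖ ≤ ‖x_k - x_PNLS‖ + ‖x_PNLS - x_LS‖`.

The first term is the randomized Kaczmarz method for the consistent system `Ã x = b`, run with
the perturbed right-hand side `b + ε`. A Kaczmarz step is an orthogonal projection onto a
hyperplane, so in expectation one step multiplies `‖x - x_PNLS‖²` by at most
`α = 1 - σ̃² / ‖Ã‖_F²` and adds `‖ε‖² / ‖Ã‖_F² = (1 - α) ‖ε‖² / σ̃²`; iterating gives
`α ^ k ‖x₀ - x_PNLS‖² + ‖ε‖² / σ̃²`, and Jensen's inequality passes to the first moment.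

The second term is deterministic. Since `rank Ã = rank A`, for `z` in the row space of `Ã` the
subspace `span {z} ⊕ ker Ã` meets the row space of `A` nontrivially, which gives Weyl's bound
`(σ - ‖E‖) ‖z‖ ≤ ‖Ã z‖`. As `Ã (x_PNLS - x_LS) = -E x_LS`, this bounds the row-space component
of `x_PNLS - x_LS` by `‖E‖ ‖x_LS‖ / (σ - ‖E‖)`. Its component in `ker Ã` is minus the projection
of `x_LS` onto `ker Ã`, where `A = -E`; as `x_LS` lies in the row space of `A`, that projection
has norm at most `‖E‖ ‖x_LS‖ / σ`.
-/
open Matrix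
open scoped RealInnerProductSpace

/-- The `i`-th row of a matrix, viewed as a vector in Euclidean space. -/
noncomputable def row {m n : ℕ} (M : Matrix (Fin m) (Fin n) ℝ) (i : Fin m) :
    EuclideanSpace ℝ (Fin n) :=
  (WithLp.equiv 2 (Fin n → ℝ)).symm (M i)

/-- Matrix-vector multiplication as a map between Euclidean spaces. -/
noncomputable def mulVecE {m n : ℕ} (M : Matrix (Fin m) (Fin n) ℝ)
    (x : EuclideanSpace ℝ (Fin n)) : EuclideanSpace ℝ (Fin m) :=
  Matrix.toEuclideanLin M x

/-- The Kaczmarz update of `x` for the system `M y = c`, using row `i`: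
`x ↦ x - ((⟨mᵢ, x⟩ - cᵢ)/‖mᵢ‖²) mᵢ`. -/
noncomputable def kaczmarz {m n : ℕ} (M : Matrix (Fin m) (Fin n) ℝ) (c : Fin m → ℝ) (i : Fin m)
    (x : EuclideanSpace ℝ (Fin n)) : EuclideanSpace ℝ (Fin n) :=
  x - ((⟪_root_.row M i, x⟫ - c i) / ‖_root_.row M i‖ ^ 2) • _root_.row M i

/-- Iterated Kaczmarz updates along the index sequence `is = (i₁, …, i_k)`,
applying row `i₁` first: `K_{i_k}(⋯ K_{i₁}(x₀) ⋯)`. -/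
noncomputable def kaczmarzIter {m n k : ℕ} (M : Matrix (Fin m) (Fin n) ℝ) (c : Fin m → ℝ)
    (is : Fin k → Fin m) (x0 : EuclideanSpace ℝ (Fin n)) : EuclideanSpace ℝ (Fin n) :=
  (List.ofFn is).foldl (fun x i => kaczmarz M c i x) x0

/-- The squared Frobenius norm `‖M‖_F² = Σ_{i,j} M_{ij}²`. -/
noncomputable def frobSq {m n : ℕ} (M : Matrix (Fin m) (Fin n) ℝ) : ℝ :=
  ∑ i, ∑ j, (M i j) ^ 2

/-- The row space `range(Mᵀ)` of a matrix, as a submodule of Euclidean space. -/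
noncomputable def rowSpace {m n : ℕ} (M : Matrix (Fin m) (Fin n) ℝ) :
    Submodule ℝ (EuclideanSpace ℝ (Fin n)) :=
  LinearMap.range (Matrix.toEuclideanLin Mᵀ)

/-- The spectral norm (operator 2-norm) of a matrix. -/
noncomputable def specNorm {m n : ℕ} (M : Matrix (Fin m) (Fin n) ℝ) : ℝ :=
  ‖LinearMap.toContinuousLinearMap (Matrix.toEuclideanLin M)‖

section Perturbation

variable {V W : Type*} [NormedAddCommGroup V] [InnerProductSpace ℝ V] [FiniteDimensional ℝ V]
  [NormedAddCommGroup W] [NormedSpace ℝ W]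

open Module LinearMap Submodule

theorem LinearMap.finrank_orthogonal_ker (T : V →ₗ[ℝ] W) :
    finrank ℝ (ker T)ᗮ = finrank ℝ (range T) := by
  have := (ker T).finrank_add_finrank_orthogonal
  have := T.finrank_range_add_finrank_ker
  omega

theorem LinearMap.mul_norm_starProjection_orthogonal_ker_le {T : V →ₗ[ℝ] W} {σ : ℝ}
    (hT : ∀ z ∈ (ker T)ᗮ, σ * ‖z‖ ≤ ‖T z‖) (z : V) :
    σ * ‖(ker T)ᗮ.starProjection z‖ ≤ ‖T z‖ := by
  have hTz : T ((ker T)ᗮ.starProjection z) = T z := by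
    have h := (ker T)ᗮ.sub_starProjection_mem_orthogonal z
    rw [orthogonal_orthogonal, mem_ker, map_sub, sub_eq_zero] at h
    exact h.symm
  simpa only [hTz] using hT _ (starProjection_apply_mem _ z)

theorem LinearMap.exists_mem_orthogonal_ker_sub_smul_mem_ker {T T' : V →ₗ[ℝ] W}
    (hrank : finrank ℝ (range T') = finrank ℝ (range T)) {z : V} (hz : z ∈ (ker T')ᗮ)
    (hz0 : z ≠ 0) : ∃ w ∈ (ker T)ᗮ, w ≠ 0 ∧ ∃ a : ℝ, w - a • z ∈ ker T' := by
  have hzK : z ∉ ker T' := fun h => hz0 (inner_self_eq_zero.mp (hz z h))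
  have hdim : finrank ℝ V <
      finrank ℝ (ker T)ᗮ + finrank ℝ (ker T' ⊔ span ℝ {z} : Submodule ℝ V) := by
    rw [finrank_sup_span_singleton hzK, T.finrank_orthogonal_ker, ← hrank,
      ← T'.finrank_range_add_finrank_ker]
    omega
  obtain ⟨w, hwT, hwT', hw0⟩ : ∃ w ∈ (ker T)ᗮ, w ∈ ker T' ⊔ span ℝ {z} ∧ w ≠ 0 := by
    by_contra! h
    exact hdim.not_ge (finrank_add_finrank_le_of_disjoint (disjoint_def.mpr h))
  obtain ⟨u, hu, v, hv, rfl⟩ := mem_sup.mp hwT'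
  obtain ⟨a, rfl⟩ := mem_span_singleton.mp hv
  exact ⟨u + a • z, hwT, hw0, a, by simpa using hu⟩

theorem LinearMap.sub_mul_norm_le_of_finrank_range_eq {T T' : V →ₗ[ℝ] W}
    (hrank : finrank ℝ (range T') = finrank ℝ (range T)) {σ e : ℝ}
    (hT : ∀ z ∈ (ker T)ᗮ, σ * ‖z‖ ≤ ‖T z‖) (hdiff : ∀ z, ‖T z - T' z‖ ≤ e * ‖z‖) :
    ∀ z ∈ (ker T')ᗮ, (σ - e) * ‖z‖ ≤ ‖T' z‖ := by
  intro z hz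
  rcases eq_or_ne z 0 with rfl | hz0
  · simp
  obtain ⟨w, hw, hw0, a, hwa⟩ := exists_mem_orthogonal_ker_sub_smul_mem_ker hrank hz hz0
  have hT'w : T' w = a • T' z := by
    rwa [← map_smul, ← sub_eq_zero, ← map_sub]
  have hinner : ⟪w, z⟫ = a * ‖z‖ ^ 2 := by
    have := hz _ hwa
    rw [inner_sub_left, real_inner_smul_left, real_inner_self_eq_norm_sq] at this
    linarith
  have ha : |a| * ‖z‖ ≤ ‖w‖ := by
    have hzpos := norm_pos_iff.mpr hz0
    have : |a| * ‖z‖ * ‖z‖ ≤ ‖w‖ * ‖z‖ := by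
      calc |a| * ‖z‖ * ‖z‖ = |⟪w, z⟫| := by rw [hinner, abs_mul, abs_sq]; ring
        _ ≤ ‖w‖ * ‖z‖ := abs_real_inner_le_norm w z
    exact le_of_mul_le_mul_right this hzpos
  have hσw : σ * ‖w‖ ≤ |a| * ‖T' z‖ + e * ‖w‖ :=
    calc σ * ‖w‖ ≤ ‖T w‖ := hT w hw
      _ ≤ ‖T' w‖ + ‖T w - T' w‖ := norm_le_norm_add_norm_sub' _ _
      _ = |a| * ‖T' z‖ + ‖T w - T' w‖ := by rw [hT'w, norm_smul, Real.norm_eq_abs]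
      _ ≤ |a| * ‖T' z‖ + e * ‖w‖ := by gcongr; exact hdiff w
  have : (σ - e) * ‖z‖ * ‖w‖ ≤ ‖T' z‖ * ‖w‖ := by
    nlinarith [norm_nonneg (T' z), norm_nonneg z, abs_nonneg a]
  exact le_of_mul_le_mul_right this (norm_pos_iff.mpr hw0)

theorem LinearMap.mul_norm_starProjection_ker_le {T T' : V →ₗ[ℝ] W} {σ e : ℝ} (hσ : 0 ≤ σ)
    (he : 0 ≤ e) (hT : ∀ z ∈ (ker T)ᗮ, σ * ‖z‖ ≤ ‖T z‖) (hdiff : ∀ z, ‖T z - T' z‖ ≤ e * ‖z‖)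
    {x : V} (hx : x ∈ (ker T)ᗮ) :
    σ * ‖(ker T').starProjection x‖ ≤ e * ‖x‖ := by
  set q := (ker T').starProjection x
  have hq : q ∈ ker T' := starProjection_apply_mem _ x
  have hnorm : ‖q‖ ^ 2 = ⟪x, (ker T)ᗮ.starProjection q⟫ :=
    calc ‖q‖ ^ 2 = ⟪(ker T').starProjection x, q⟫ := (real_inner_self_eq_norm_sq q).symm
      _ = ⟪x, q⟫ := by rw [inner_starProjection_left_eq_right, starProjection_eq_self_iff.mpr hq]
      _ = ⟪x, (ker T)ᗮ.starProjection q⟫ := by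
        rw [← inner_starProjection_left_eq_right (ker T)ᗮ, starProjection_eq_self_iff.mpr hx]
  have hTq : σ * ‖(ker T)ᗮ.starProjection q‖ ≤ e * ‖q‖ := by
    calc _ ≤ ‖T q‖ := mul_norm_starProjection_orthogonal_ker_le hT q
      _ = ‖T q - T' q‖ := by rw [mem_ker.mp hq, sub_zero]
      _ ≤ e * ‖q‖ := hdiff q
  have : σ * ‖q‖ * ‖q‖ ≤ e * ‖x‖ * ‖q‖ := by
    calc σ * ‖q‖ * ‖q‖ = σ * ⟪x, (ker T)ᗮ.starProjection q⟫ := by rw [← hnorm]; ring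
      _ ≤ σ * (‖x‖ * ‖(ker T)ᗮ.starProjection q‖) := by gcongr; exact real_inner_le_norm _ _
      _ ≤ e * ‖x‖ * ‖q‖ := by nlinarith [norm_nonneg x]
  rcases (norm_nonneg q).eq_or_lt with hq0 | hqpos
  · rw [← hq0, mul_zero]; positivity
  · exact le_of_mul_le_mul_right this hqpos

theorem LinearMap.norm_sub_le_of_finrank_range_eq {T T' : V →ₗ[ℝ] W}
    (hrank : finrank ℝ (range T') = finrank ℝ (range T)) {σ e : ℝ} (he : 0 ≤ e) (heσ : e < σ)
    (hT : ∀ z ∈ (ker T)ᗮ, σ * ‖z‖ ≤ ‖T z‖) (hdiff : ∀ z, ‖T z - T' z‖ ≤ e * ‖z‖)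
    {x x' : V} (hx : x ∈ (ker T)ᗮ) (hx' : x' ∈ (ker T')ᗮ) (hTx : T' x' = T x) :
    ‖x' - x‖ ≤ e * ‖x‖ / (σ - e) + e * ‖x‖ / σ := by
  set K := ker T'
  have hrange : (σ - e) * ‖Kᗮ.starProjection (x' - x)‖ ≤ e * ‖x‖ :=
    calc _ ≤ ‖T' (x' - x)‖ :=
          mul_norm_starProjection_orthogonal_ker_le
            (sub_mul_norm_le_of_finrank_range_eq hrank hT hdiff) _
      _ = ‖T x - T' x‖ := by rw [map_sub, hTx]
      _ ≤ e * ‖x‖ := hdiff x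
  have hker : σ * ‖K.starProjection x‖ ≤ e * ‖x‖ :=
    mul_norm_starProjection_ker_le (he.trans heσ.le) he hT hdiff hx
  have hsplit : x' - x = Kᗮ.starProjection (x' - x) - K.starProjection x := by
    conv_lhs => rw [← K.starProjection_add_starProjection_orthogonal (x' - x)]
    rw [map_sub, (starProjection_apply_eq_zero_iff K).mpr hx']
    abel
  calc ‖x' - x‖ ≤ ‖Kᗮ.starProjection (x' - x)‖ + ‖K.starProjection x‖ :=
        (congrArg (‖·‖) hsplit).trans_le (norm_sub_le _ _)
    _ ≤ e * ‖x‖ / (σ - e) + e * ‖x‖ / σ := by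
        gcongr
        · rwa [le_div_iff₀' (sub_pos.mpr heσ)]
        · rwa [le_div_iff₀' (he.trans_lt heσ)]

end Perturbation

section WeightedSums

variable {ι : Type*} [Fintype ι] {p : ι → ℝ}

theorem sum_prod_le_one (hp : ∀ i, 0 ≤ p i) (hp1 : ∑ i, p i ≤ 1) (k : ℕ) :
    ∑ is : Fin k → ι, ∏ j, p (is j) ≤ 1 := by
  rw [← Fintype.prod_sum fun (_ : Fin k) i => p i, Finset.prod_const]
  exact pow_le_one₀ (Finset.sum_nonneg fun i _ => hp i) hp1

theorem sum_mul_le_sqrt_sum_mul_sq (hp : ∀ i, 0 ≤ p i) (hp1 : ∑ i, p i ≤ 1) (a : ι → ℝ) :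
    ∑ i, p i * a i ≤ √(∑ i, p i * a i ^ 2) := by
  refine (le_abs_self _).trans (Real.abs_le_sqrt ?_)
  have hCS := Finset.sum_sq_le_sum_mul_sum_of_sq_le_mul Finset.univ (r := fun i => p i * a i)
    (fun i _ => hp i) (fun i _ => mul_nonneg (hp i) (sq_nonneg (a i)))
    (fun i _ => (by ring : (p i * a i) ^ 2 = p i * (p i * a i ^ 2)).le)
  exact hCS.trans (mul_le_of_le_one_left
    (Finset.sum_nonneg fun i _ => mul_nonneg (hp i) (sq_nonneg (a i))) hp1)

theorem sum_mul_norm_sub_le {E : Type*} [SeminormedAddCommGroup E] (hp : ∀ i, 0 ≤ p i)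
    (hp1 : ∑ i, p i ≤ 1) (x : ι → E) (y z : E) :
    ∑ i, p i * ‖x i - y‖ ≤ ∑ i, p i * ‖x i - z‖ + ‖z - y‖ :=
  calc ∑ i, p i * ‖x i - y‖ ≤ ∑ i, p i * (‖x i - z‖ + ‖z - y‖) :=
        Finset.sum_le_sum fun i _ =>
          mul_le_mul_of_nonneg_left (norm_sub_le_norm_sub_add_norm_sub _ _ _) (hp i)
    _ = ∑ i, p i * ‖x i - z‖ + (∑ i, p i) * ‖z - y‖ := by
        rw [Finset.sum_mul, ← Finset.sum_add_distrib]; simp only [mul_add]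
    _ ≤ ∑ i, p i * ‖x i - z‖ + ‖z - y‖ := by
        gcongr; exact mul_le_of_le_one_left (norm_nonneg _) hp1

theorem sum_prod_mul_foldl_le {X : Type*} (hp : ∀ i, 0 ≤ p i) (hp1 : ∑ i, p i ≤ 1)
    {f : ι → X → X} {S : Set X} (hS : ∀ i, Set.MapsTo (f i) S S) {V : X → ℝ} {α B : ℝ}
    (hα0 : 0 ≤ α) (hα1 : α ≤ 1) (hB : 0 ≤ B)
    (hstep : ∀ x ∈ S, ∑ i, p i * V (f i x) ≤ α * V x + (1 - α) * B) (k : ℕ) {x : X}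
    (hx : x ∈ S) :
    ∑ is : Fin k → ι, (∏ j, p (is j)) * V ((List.ofFn is).foldl (fun y i => f i y) x)
      ≤ α ^ k * V x + (1 - α ^ k) * B := by
  induction k generalizing x with
  | zero => simp
  | succ k ih =>
    have hB' : 0 ≤ (1 - α ^ k) * B := mul_nonneg (sub_nonneg.mpr (pow_le_one₀ hα0 hα1)) hB
    calc ∑ is : Fin (k + 1) → ι, (∏ j, p (is j)) * V ((List.ofFn is).foldl (fun y i => f i y) x)
        = ∑ i, p i * ∑ is : Fin k → ι,
            (∏ j, p (is j)) * V ((List.ofFn is).foldl (fun y i => f i y) (f i x)) := by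
          rw [← (Fin.consEquiv fun _ => ι).sum_comp, Fintype.sum_prod_type]
          simp [Fin.prod_univ_succ, List.ofFn_succ, Finset.mul_sum, mul_assoc]
      _ ≤ ∑ i, p i * (α ^ k * V (f i x) + (1 - α ^ k) * B) :=
          Finset.sum_le_sum fun i _ => mul_le_mul_of_nonneg_left (ih (hS i hx)) (hp i)
      _ = α ^ k * ∑ i, p i * V (f i x) + (∑ i, p i) * ((1 - α ^ k) * B) := by
          rw [Finset.mul_sum, Finset.sum_mul, ← Finset.sum_add_distrib]
          exact Finset.sum_congr rfl fun i _ => by ring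
      _ ≤ α ^ k * (α * V x + (1 - α) * B) + 1 * ((1 - α ^ k) * B) := by
          gcongr
          · exact hstep x hx
      _ = α ^ (k + 1) * V x + (1 - α ^ (k + 1)) * B := by ring

end WeightedSums

section Kaczmarz

variable {m n : ℕ}

theorem rowSpace_eq_orthogonal_ker (M : Matrix (Fin m) (Fin n) ℝ) :
    rowSpace M = (LinearMap.ker (Matrix.toEuclideanLin M))ᗮ := by
  rw [LinearMap.orthogonal_ker, rowSpace, ← Matrix.toEuclideanLin_conjTranspose_eq_adjoint,
    Matrix.conjTranspose_eq_transpose_of_trivial]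

theorem rank_eq_finrank_range_toEuclideanLin (M : Matrix (Fin m) (Fin n) ℝ) :
    M.rank = Module.finrank ℝ (LinearMap.range (Matrix.toEuclideanLin M)) :=
  M.rank_eq_finrank_range_toLin (EuclideanSpace.basisFun (Fin m) ℝ).toBasis
    (EuclideanSpace.basisFun (Fin n) ℝ).toBasis

theorem norm_mulVecE_le (M : Matrix (Fin m) (Fin n) ℝ) (z : EuclideanSpace ℝ (Fin n)) :
    ‖mulVecE M z‖ ≤ specNorm M * ‖z‖ :=
  (LinearMap.toContinuousLinearMap (Matrix.toEuclideanLin M)).le_opNorm z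

theorem norm_sub_le_of_rank_eq (A E : Matrix (Fin m) (Fin n) ℝ) (hrank : (A + E).rank = A.rank)
    {σ : ℝ} (hσA : ∀ z ∈ rowSpace A, σ * ‖z‖ ≤ ‖mulVecE A z‖) (hE : specNorm E < σ)
    {x x' : EuclideanSpace ℝ (Fin n)} (hx : x ∈ rowSpace A) (hx' : x' ∈ rowSpace (A + E))
    (hxx' : mulVecE (A + E) x' = mulVecE A x) :
    ‖x' - x‖ ≤ 2 * ‖x‖ * (specNorm E / σ) / (1 - specNorm E / σ) := by
  set e := specNorm E
  have he : 0 ≤ e := norm_nonneg _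
  have hσ : 0 < σ := he.trans_lt hE
  rw [rowSpace_eq_orthogonal_ker] at hσA hx hx'
  have hdiff : ∀ z, ‖Matrix.toEuclideanLin A z - Matrix.toEuclideanLin (A + E) z‖ ≤ e * ‖z‖ := by
    intro z
    rw [map_add, LinearMap.add_apply, sub_add_cancel_left, norm_neg]
    exact norm_mulVecE_le E z
  have hrank' : Module.finrank ℝ (LinearMap.range (Matrix.toEuclideanLin (A + E))) =
      Module.finrank ℝ (LinearMap.range (Matrix.toEuclideanLin A)) := by
    rw [← rank_eq_finrank_range_toEuclideanLin, ← rank_eq_finrank_range_toEuclideanLin, hrank]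
  calc ‖x' - x‖ ≤ e * ‖x‖ / (σ - e) + e * ‖x‖ / σ :=
        LinearMap.norm_sub_le_of_finrank_range_eq hrank' he hE hσA hdiff hx hx' hxx'
    _ ≤ e * ‖x‖ / (σ - e) + e * ‖x‖ / (σ - e) := by
        gcongr; linarith
    _ = 2 * ‖x‖ * (e / σ) / (1 - e / σ) := by
        have : σ - e ≠ 0 := (sub_pos.mpr hE).ne'
        field_simp
        ring

theorem inner_row (M : Matrix (Fin m) (Fin n) ℝ) (i : Fin m) (x : EuclideanSpace ℝ (Fin n)) :
    ⟪_root_.row M i, x⟫ = mulVecE M x i := by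
  simp [mulVecE, _root_.row, PiLp.inner_apply, Matrix.mulVec, dotProduct, mul_comm]

theorem frobSq_eq_sum_norm_row_sq (M : Matrix (Fin m) (Fin n) ℝ) :
    frobSq M = ∑ i, ‖_root_.row M i‖ ^ 2 := by
  simp [frobSq, EuclideanSpace.real_norm_sq_eq, _root_.row]

theorem norm_mulVecE_sq (M : Matrix (Fin m) (Fin n) ℝ) (z : EuclideanSpace ℝ (Fin n)) :
    ‖mulVecE M z‖ ^ 2 = ∑ i, ⟪_root_.row M i, z⟫ ^ 2 := by
  simp [EuclideanSpace.real_norm_sq_eq, inner_row]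

theorem norm_mulVecE_sq_le (M : Matrix (Fin m) (Fin n) ℝ) (z : EuclideanSpace ℝ (Fin n)) :
    ‖mulVecE M z‖ ^ 2 ≤ frobSq M * ‖z‖ ^ 2 := by
  rw [norm_mulVecE_sq, frobSq_eq_sum_norm_row_sq, Finset.sum_mul]
  gcongr with i
  rw [← mul_pow, ← sq_abs]
  gcongr
  exact abs_real_inner_le_norm _ _

theorem row_mem_rowSpace (M : Matrix (Fin m) (Fin n) ℝ) (i : Fin m) : _root_.row M i ∈ rowSpace M :=
  ⟨EuclideanSpace.single i 1, by ext j; simp [_root_.row, Matrix.mulVec_single]⟩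

theorem frobSq_nonneg (M : Matrix (Fin m) (Fin n) ℝ) : 0 ≤ frobSq M := by
  unfold frobSq; positivity

theorem sum_sq_norm_row_div_frobSq_le_one (M : Matrix (Fin m) (Fin n) ℝ) :
    ∑ i, ‖_root_.row M i‖ ^ 2 / frobSq M ≤ 1 := by
  rw [← Finset.sum_div, ← frobSq_eq_sum_norm_row_sq]
  exact div_self_le_one _

theorem sq_div_frobSq_le_one {M : Matrix (Fin m) (Fin n) ℝ} {σ : ℝ} (hσ : 0 ≤ σ)
    (hσM : ∀ z ∈ rowSpace M, σ * ‖z‖ ≤ ‖mulVecE M z‖) : σ ^ 2 / frobSq M ≤ 1 := by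
  by_cases hrows : ∀ i, _root_.row M i = 0
  · simp [frobSq_eq_sum_norm_row_sq, hrows]
  obtain ⟨i, hi⟩ := not_forall.mp hrows
  have hpos : 0 < ‖_root_.row M i‖ ^ 2 := pow_pos (norm_pos_iff.mpr hi) 2
  have h : σ ^ 2 * ‖_root_.row M i‖ ^ 2 ≤ frobSq M * ‖_root_.row M i‖ ^ 2 :=
    calc σ ^ 2 * ‖_root_.row M i‖ ^ 2 = (σ * ‖_root_.row M i‖) ^ 2 := by ring
      _ ≤ ‖mulVecE M (_root_.row M i)‖ ^ 2 := by
          gcongr; exact hσM _ (row_mem_rowSpace M i)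
      _ ≤ frobSq M * ‖_root_.row M i‖ ^ 2 := norm_mulVecE_sq_le M _
  have hσF := le_of_mul_le_mul_right h hpos
  exact div_le_one_of_le₀ hσF (frobSq_nonneg M)

theorem norm_kaczmarz_sub_sq (M : Matrix (Fin m) (Fin n) ℝ) (c : Fin m → ℝ) {i : Fin m}
    (hi : _root_.row M i ≠ 0) (x xstar : EuclideanSpace ℝ (Fin n)) :
    ‖kaczmarz M c i x - xstar‖ ^ 2 = ‖x - xstar‖ ^ 2
      - (⟪_root_.row M i, x - xstar⟫ ^ 2 - (c i - ⟪_root_.row M i, xstar⟫) ^ 2)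
        / ‖_root_.row M i‖ ^ 2 := by
  have hs : ‖_root_.row M i‖ ≠ 0 := norm_ne_zero_iff.mpr hi
  have hK : kaczmarz M c i x - xstar = (x - xstar)
      - ((⟪_root_.row M i, x - xstar⟫ - (c i - ⟪_root_.row M i, xstar⟫)) / ‖_root_.row M i‖ ^ 2)
        • _root_.row M i := by
    rw [kaczmarz, inner_sub_right]
    abel_nf
  rw [hK, norm_sub_sq_real, norm_smul, real_inner_smul_right, real_inner_comm, Real.norm_eq_abs,
    mul_pow, sq_abs]
  field_simp
  ring

theorem kaczmarz_sub_mem_rowSpace (M : Matrix (Fin m) (Fin n) ℝ) (c : Fin m → ℝ) (i : Fin m)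
    {x xstar : EuclideanSpace ℝ (Fin n)} (hx : x - xstar ∈ rowSpace M) :
    kaczmarz M c i x - xstar ∈ rowSpace M := by
  rw [kaczmarz, sub_right_comm]
  exact Submodule.sub_mem _ hx (Submodule.smul_mem _ _ (row_mem_rowSpace M i))

theorem sum_mul_norm_kaczmarz_sub_sq_le (M : Matrix (Fin m) (Fin n) ℝ) {σ : ℝ} (hσ : 0 ≤ σ)
    (hσM : ∀ z ∈ rowSpace M, σ * ‖z‖ ≤ ‖mulVecE M z‖) (xstar : EuclideanSpace ℝ (Fin n))
    (r : EuclideanSpace ℝ (Fin m)) {x : EuclideanSpace ℝ (Fin n)} (hx : x - xstar ∈ rowSpace M) :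
    ∑ i, ‖_root_.row M i‖ ^ 2 / frobSq M *
        ‖kaczmarz M (fun i => mulVecE M xstar i + r i) i x - xstar‖ ^ 2
      ≤ (1 - σ ^ 2 / frobSq M) * ‖x - xstar‖ ^ 2 + ‖r‖ ^ 2 / frobSq M := by
  have hF := frobSq_nonneg M
  set F := frobSq M
  have hrow : ∀ i, ‖_root_.row M i‖ ^ 2 / F *
        ‖kaczmarz M (fun i => mulVecE M xstar i + r i) i x - xstar‖ ^ 2
      ≤ ‖_root_.row M i‖ ^ 2 / F * ‖x - xstar‖ ^ 2
        - ⟪_root_.row M i, x - xstar⟫ ^ 2 / F + r i ^ 2 / F := by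
    intro i
    by_cases hi : _root_.row M i = 0
    · simp only [hi, norm_zero, inner_zero_left, zero_pow two_ne_zero, zero_div, zero_mul,
        sub_self, zero_add]
      exact div_nonneg (sq_nonneg _) hF
    rw [norm_kaczmarz_sub_sq M _ hi, inner_row M i xstar, add_sub_cancel_left]
    have : ‖_root_.row M i‖ ≠ 0 := norm_ne_zero_iff.mpr hi
    field_simp
    exact le_of_eq (by ring)
  have hσx : σ ^ 2 * ‖x - xstar‖ ^ 2 ≤ ‖mulVecE M (x - xstar)‖ ^ 2 := by
    rw [← mul_pow]; gcongr; exact hσM _ hx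
  calc _ ≤ ∑ i, (‖_root_.row M i‖ ^ 2 / F * ‖x - xstar‖ ^ 2
        - ⟪_root_.row M i, x - xstar⟫ ^ 2 / F + r i ^ 2 / F) := Finset.sum_le_sum fun i _ => hrow i
    _ = F / F * ‖x - xstar‖ ^ 2 - ‖mulVecE M (x - xstar)‖ ^ 2 / F + ‖r‖ ^ 2 / F := by
        simp only [Finset.sum_add_distrib, Finset.sum_sub_distrib, ← Finset.sum_div,
          ← Finset.sum_mul]
        rw [← frobSq_eq_sum_norm_row_sq, ← norm_mulVecE_sq, ← EuclideanSpace.real_norm_sq_eq]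
    _ ≤ 1 * ‖x - xstar‖ ^ 2 - σ ^ 2 * ‖x - xstar‖ ^ 2 / F + ‖r‖ ^ 2 / F := by
        gcongr
        exact div_self_le_one F
    _ = (1 - σ ^ 2 / F) * ‖x - xstar‖ ^ 2 + ‖r‖ ^ 2 / F := by ring

theorem sum_prod_mul_norm_kaczmarzIter_sub_le (M : Matrix (Fin m) (Fin n) ℝ) {σ : ℝ} (hσ : 0 < σ)
    (hσM : ∀ z ∈ rowSpace M, σ * ‖z‖ ≤ ‖mulVecE M z‖) (xstar : EuclideanSpace ℝ (Fin n))
    (r : EuclideanSpace ℝ (Fin m)) {x0 : EuclideanSpace ℝ (Fin n)}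
    (hx0 : x0 - xstar ∈ rowSpace M) (k : ℕ) :
    ∑ is : Fin k → Fin m, (∏ j, ‖_root_.row M (is j)‖ ^ 2 / frobSq M) *
        ‖kaczmarzIter M (fun i => mulVecE M xstar i + r i) is x0 - xstar‖
      ≤ √((1 - σ ^ 2 / frobSq M) ^ k) * ‖x0 - xstar‖ + ‖r‖ / σ := by
  set α := 1 - σ ^ 2 / frobSq M
  have hp : ∀ i, 0 ≤ ‖_root_.row M i‖ ^ 2 / frobSq M := fun i =>
    div_nonneg (sq_nonneg _) (frobSq_nonneg M)
  have hp1 := sum_sq_norm_row_div_frobSq_le_one M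
  have hα0 : 0 ≤ α := sub_nonneg.mpr (sq_div_frobSq_le_one hσ.le hσM)
  have hα1 : α ≤ 1 := sub_le_self _ (div_nonneg (sq_nonneg σ) (frobSq_nonneg M))
  have hstep : ∀ x ∈ {x | x - xstar ∈ rowSpace M},
      ∑ i, ‖_root_.row M i‖ ^ 2 / frobSq M *
          ‖kaczmarz M (fun i => mulVecE M xstar i + r i) i x - xstar‖ ^ 2
        ≤ α * ‖x - xstar‖ ^ 2 + (1 - α) * (‖r‖ / σ) ^ 2 := by
    intro x hx
    convert sum_mul_norm_kaczmarz_sub_sq_le M hσ.le hσM xstar r hx using 2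
    rw [sub_sub_cancel, div_pow]
    field_simp
  have hsq := sum_prod_mul_foldl_le (S := {x | x - xstar ∈ rowSpace M})
    (f := kaczmarz M fun i => mulVecE M xstar i + r i) (V := fun x => ‖x - xstar‖ ^ 2) hp hp1
    (fun i x hx => kaczmarz_sub_mem_rowSpace M _ i hx) hα0 hα1 (sq_nonneg _) hstep k hx0
  calc _ ≤ √(∑ is : Fin k → Fin m, (∏ j, ‖_root_.row M (is j)‖ ^ 2 / frobSq M) *
          ‖kaczmarzIter M (fun i => mulVecE M xstar i + r i) is x0 - xstar‖ ^ 2) :=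
        sum_mul_le_sqrt_sum_mul_sq (fun is => Finset.prod_nonneg fun j _ => hp (is j))
          (sum_prod_le_one hp hp1 k) _
    _ ≤ √(α ^ k * ‖x0 - xstar‖ ^ 2 + (1 - α ^ k) * (‖r‖ / σ) ^ 2) := Real.sqrt_le_sqrt hsq
    _ ≤ √(α ^ k) * ‖x0 - xstar‖ + ‖r‖ / σ := by
        have hαk := Real.sq_sqrt (pow_nonneg hα0 k)
        rw [Real.sqrt_le_iff]
        refine ⟨by positivity, ?_⟩
        have hb : 0 ≤ ‖r‖ / σ := by positivity
        nlinarith [mul_nonneg (mul_nonneg (Real.sqrt_nonneg (α ^ k)) (norm_nonneg (x0 - xstar))) hb,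
          mul_nonneg (pow_nonneg hα0 k) (sq_nonneg (‖r‖ / σ))]

end Kaczmarz

theorem rk_via_partially_noisy_system_general {m n : ℕ}
    (A E : Matrix (Fin m) (Fin n) ℝ)
    (hrank : (A + E).rank = A.rank)
    (σ : ℝ)
    (hσA : ∀ z ∈ rowSpace A, σ * ‖z‖ ≤ ‖mulVecE A z‖)
    (hE : specNorm E < σ)
    (σt : ℝ) (hσt : 0 < σt)
    (hσtA : ∀ z ∈ rowSpace (A + E), σt * ‖z‖ ≤ ‖mulVecE (A + E) z‖)
    (xLS : EuclideanSpace ℝ (Fin n)) (hxLS : xLS ∈ rowSpace A)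
    (xPNLS : EuclideanSpace ℝ (Fin n))
    (hPNLS : mulVecE (A + E) xPNLS = mulVecE A xLS)
    (hxPNLS : xPNLS ∈ rowSpace (A + E))
    (ε : EuclideanSpace ℝ (Fin m))
    (x0 : EuclideanSpace ℝ (Fin n)) (hx0 : x0 ∈ rowSpace (A + E))
    (k : ℕ) :
    ∑ is : Fin k → Fin m,
        (∏ j, ‖_root_.row (A + E) (is j)‖ ^ 2 / frobSq (A + E)) *
          ‖kaczmarzIter (A + E) (fun j => mulVecE A xLS j + ε j) is x0 - xLS‖
      ≤ Real.sqrt ((1 - σt ^ 2 / frobSq (A + E)) ^ k) * ‖x0 - xPNLS‖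
        + 2 * ‖xLS‖ * (specNorm E / σ) / (1 - specNorm E / σ)
        + ‖ε‖ / σt := by
  have hp : ∀ i, 0 ≤ ‖_root_.row (A + E) i‖ ^ 2 / frobSq (A + E) := fun i =>
    div_nonneg (sq_nonneg _) (frobSq_nonneg _)
  rw [← hPNLS]
  refine (sum_mul_norm_sub_le (fun is => Finset.prod_nonneg fun j _ => hp (is j))
    (sum_prod_le_one hp (sum_sq_norm_row_div_frobSq_le_one _) k) _ xLS xPNLS).trans ?_
  have hRK := sum_prod_mul_norm_kaczmarzIter_sub_le (A + E) hσt hσtA xPNLS ε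
    (Submodule.sub_mem _ hx0 hxPNLS) k
  have hLS := norm_sub_le_of_rank_eq A E hrank hσA hE hxLS hxPNLS hPNLS
  linarith

/-- Randomized Kaczmarz via the partially noisy system: `Ã = A + E` with
`rank(A+E) = rank(A)` and `‖E‖ < σ`; the partially noisy system `Ã x = b` is
consistent with minimum-norm solution `x_PNLS`, while RK is run on `Ã x ≈ b̃`
with `b̃ = b + ε`, `b = A x_LS`. The left-hand side is the expectation
`E‖x_k - x_LS‖`. -/
theorem rk_via_partially_noisy_system {m n : ℕ}
    (A E : Matrix (Fin m) (Fin n) ℝ)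
    (hrank : (A + E).rank = A.rank)
    (hrow : ∀ i, _root_.row (A + E) i ≠ 0)
    (σ : ℝ) (hσ : 0 < σ)
    (hσA : ∀ z ∈ rowSpace A, σ * ‖z‖ ≤ ‖mulVecE A z‖)
    (hE : specNorm E < σ)
    (σt : ℝ) (hσt : 0 < σt)
    (hσtA : ∀ z ∈ rowSpace (A + E), σt * ‖z‖ ≤ ‖mulVecE (A + E) z‖)
    (xLS : EuclideanSpace ℝ (Fin n)) (hxLS : xLS ∈ rowSpace A)
    (xPNLS : EuclideanSpace ℝ (Fin n))
    (hPNLS : mulVecE (A + E) xPNLS = mulVecE A xLS)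
    (hxPNLS : xPNLS ∈ rowSpace (A + E))
    (ε : EuclideanSpace ℝ (Fin m))
    (x0 : EuclideanSpace ℝ (Fin n)) (hx0 : x0 ∈ rowSpace (A + E))
    (k : ℕ) :
    ∑ is : Fin k → Fin m,
        (∏ j, ‖_root_.row (A + E) (is j)‖ ^ 2 / frobSq (A + E)) *
          ‖kaczmarzIter (A + E) (fun j => mulVecE A xLS j + ε j) is x0 - xLS‖
      ≤ Real.sqrt ((1 - σt ^ 2 / frobSq (A + E)) ^ k) * ‖x0 - xPNLS‖
        + 2 * ‖xLS‖ * (specNorm E / σ) / (1 - specNorm E / σ)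
        + ‖ε‖ / σt :=
  rk_via_partially_noisy_system_general A E hrank σ hσA hE σt hσt hσtA xLS hxLS xPNLS hPNLS hxPNLS ε
    x0 hx0 k
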